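/- Let W be a Coxeter group with simple reflections S, δ an automorphism of W with δ(S) = S, and J ⊆ S with W_J finite. Let T(J,δ) be the set of sequences (J_n, w_n)_{n≥0} with J = J₀ ⊇ J₁ ⊇ ⋯, w_n ∈ ^{δ(J_n)}W^{J_n}, J_{n+1} = J_n ∩ δ⁻¹(Ad(w_n) J_n), and w_{n+1} ∈ w_n W_{J_n} for all n. Then the map (J_n, w_n)_{n≥0} ↦ w_∞ (the eventual constant value of the sequence w_n) is a bijection from T(J,δ) onto ^{δ(J)}W, the set of minimal-length representatives of the cosets W_{δ(J)}\W. -/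

import Mathlib

open CoxeterSystem

variable {B W : Type*} [DecidableEq B] [Group W] {M : CoxeterMatrix B}

/-- The standard parabolic subgroup `W_J`. -/
def parabolic (cs : CoxeterSystem M W) (J : Finset B) : Subgroup W :=
  Subgroup.closure (cs.simple '' ↑J)

/-- `w` is the minimal length representative of its coset `W_K w` (i.e. `w ∈ ᴷW`):
no simple reflection from `K` is a left descent. -/
def IsMinLeft (cs : CoxeterSystem M W) (K : Finset B) (w : W) : Prop :=
  ∀ i ∈ K, cs.length w < cs.length (cs.simple i * w)

/-- `w ∈ ᴷWᴶ`: minimal length representative of its double coset `W_K w W_J`. -/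
def IsMinDouble (cs : CoxeterSystem M W) (K J : Finset B) (w : W) : Prop :=
  (∀ i ∈ K, cs.length w < cs.length (cs.simple i * w)) ∧
  (∀ j ∈ J, cs.length w < cs.length (w * cs.simple j))

/-- The set `T(J,δ)` of Bédard: sequences `(J_n, w_n)` with `J₀ = J`,
`w_n ∈ ^{δ(J_n)}W^{J_n}`, `J_{n+1} = J_n ∩ δ⁻¹(Ad(w_n) J_n)` and
`w_{n+1} ∈ w_n W_{J_n}`. -/
def InT (cs : CoxeterSystem M W) (δW : W ≃* W) (δb : B ≃ B) (J : Finset B)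
    (Js : ℕ → Finset B) (ws : ℕ → W) : Prop :=
  Js 0 = J ∧
  (∀ n, IsMinDouble cs ((Js n).image δb) (Js n) (ws n)) ∧
  (∀ n, ∀ i : B, i ∈ Js (n + 1) ↔
      i ∈ Js n ∧ ∃ j ∈ Js n, δW (cs.simple i) = ws n * cs.simple j * (ws n)⁻¹) ∧
  (∀ n, (ws n)⁻¹ * ws (n + 1) ∈ parabolic cs (Js n))

/-- `v` is the eventual value of the sequence `ws`. -/
def EvVal (ws : ℕ → W) (v : W) : Prop := ∃ N : ℕ, ∀ n : ℕ, N ≤ n → ws n = v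

/-!
All the Coxeter combinatorics rests on the strong exchange condition, obtained from the sign
representation of `W` on `W × ℤˣ`. It yields the deletion condition and hence the length
additivity `ℓ (x u) = ℓ x + ℓ u` for `x ∈ Wᴷ` and `u ∈ W_K`.

For `(J_n, w_n) ∈ T(J,δ)`, the lengths `ℓ w_n` increase while `w_n ∈ w_0 W_J`, so `w_n` stabilizes
when `W_J` is finite. An induction on `n` shows that no `w_n` has a left descent in `δ(J)`.
Since `w_n` is the minimal representative of `w_∞ W_{J_n}`, the sequence is determined by `w_∞`;
conversely, for `v ∈ ^{δ(J)}W` this recipe defines a sequence in `T(J,δ)`. Once its `J_n` is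
stable, `Ad(w_n)` carries `{s_j : j ∈ J_n}` onto `δ{s_i : i ∈ J_n}`, which forces `w_n = v`.
-/

namespace CoxeterSystem

section StrongExchange

open scoped Classical List

variable {B W : Type*} [Group W] {M : CoxeterMatrix B} (cs : CoxeterSystem M W)

local prefix:100 "s" => cs.simple
local prefix:100 "π" => cs.wordProd
local prefix:100 "ℓ" => cs.length
local prefix:100 "ris " => cs.rightInvSeq
local prefix:100 "lis " => cs.leftInvSeq

noncomputable def signPerm (i : B) : Equiv.Perm (W × ℤˣ) :=
  Function.Involutive.toPerm (fun p => (s i * p.1 * s i, if p.1 = s i then -p.2 else p.2)) <| by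
    rintro ⟨w, ε⟩
    by_cases hw : w = s i <;> simp [hw, mul_assoc, mul_eq_one_iff_eq_inv]

theorem signPerm_apply (i : B) (w : W) (ε : ℤˣ) :
    cs.signPerm i (w, ε) = (s i * w * s i, if w = s i then -ε else ε) := rfl

theorem prod_map_signPerm_apply (ω : List B) (w : W) (ε : ℤˣ) :
    (ω.map cs.signPerm).prod (w, ε) =
      (π ω * w * (π ω)⁻¹, ε * (-1) ^ (ris ω).count w) := by
  induction ω generalizing w ε with
  | nil => simp
  | cons i ω ih =>
    have hconj : π ω * w * (π ω)⁻¹ = s i ↔ (π ω)⁻¹ * s i * π ω = w := by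
      constructor <;> intro h <;> rw [← h] <;> group
    rw [List.map_cons, List.prod_cons, Equiv.Perm.mul_apply, ih, signPerm_apply, rightInvSeq,
      List.count_cons, wordProd_cons]
    simp only [beq_iff_eq, hconj]
    refine Prod.ext (by simp [mul_assoc]) ?_
    split_ifs <;> simp [pow_succ]

theorem prod_map_alternatingWord {G : Type*} [Monoid G] (f : B → G) (i i' : B) (m : ℕ) :
    ((alternatingWord i i' (2 * m)).map f).prod = (f i * f i') ^ m := by
  induction m with
  | zero => simp [alternatingWord]
  | succ m ih =>
    rw [show 2 * (m + 1) = 2 * m + 1 + 1 by ring, alternatingWord_succ', alternatingWord_succ']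
    simp [parity_simps, ih, pow_succ', mul_assoc]

theorem rightInvSeq_alternatingWord (i i' : B) (n : ℕ) :
    ris (alternatingWord i i' n) =
      ((List.range n).map fun k => s i' * (s i * s i') ^ k).reverse := by
  have hinv (c : ℕ) : s i' * (s i * s i') ^ c * s i' = ((s i * s i') ^ c)⁻¹ := by
    have := conj_pow (a := s i') (b := s i * s i') (i := c)
    simp only [inv_simple] at this
    rw [← this, ← inv_pow]
    simp [mul_assoc]
  induction n with
  | zero => simp [alternatingWord]
  | succ n ih =>
    rw [alternatingWord_succ', rightInvSeq, ih, List.range_succ, List.map_append,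
      List.reverse_append]
    congr 1
    rw [prod_alternatingWord_eq_mul_pow]
    obtain ⟨c, rfl | rfl⟩ := Nat.even_or_odd' n <;> beta_reduce
    · rw [if_pos (even_two_mul c), if_pos (even_two_mul c), Nat.mul_div_cancel_left c two_pos,
        one_mul, ← hinv, two_mul, pow_add]
      simp [mul_assoc]
    · rw [if_neg (Nat.not_even_two_mul_add_one c), if_neg (Nat.not_even_two_mul_add_one c),
        Nat.mul_add_div two_pos, Nat.div_eq_of_lt one_lt_two, add_zero, mul_inv_rev, ← hinv,
        two_mul, add_assoc, pow_add, pow_succ']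
      simp [mul_assoc]

theorem even_count_rightInvSeq_alternatingWord (i i' : B) (w : W) :
    Even ((ris (alternatingWord i i' (2 * M i i'))).count w) := by
  have hperiod (k : ℕ) : s i' * (s i * s i') ^ (M i i' + k) = s i' * (s i * s i') ^ k := by
    rw [pow_add, simple_mul_simple_pow, one_mul]
  rw [rightInvSeq_alternatingWord, List.count_reverse, two_mul, List.range_add, List.map_append,
    List.map_map, List.count_append]
  simp only [Function.comp_def, hperiod]
  exact ⟨_, rfl⟩

theorem isLiftable_signPerm : M.IsLiftable cs.signPerm := by
  intro i i'
  ext ⟨w, ε⟩ : 1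
  rw [← prod_map_alternatingWord, prod_map_signPerm_apply, prod_alternatingWord_eq_mul_pow,
    if_pos (even_two_mul _), Nat.mul_div_cancel_left _ two_pos, simple_mul_simple_pow,
    (cs.even_count_rightInvSeq_alternatingWord i i' w).neg_one_pow]
  simp

/-- The sign representation: `w` sends `(t, ε)` to `(w t w⁻¹, ±ε)`, the sign recording whether
`t` is a right inversion of `w`. -/
noncomputable def signRep : W →* Equiv.Perm (W × ℤˣ) :=
  cs.lift ⟨cs.signPerm, cs.isLiftable_signPerm⟩

theorem signRep_simple (i : B) : cs.signRep (s i) = cs.signPerm i :=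
  cs.lift_apply_simple cs.isLiftable_signPerm i

theorem signRep_wordProd (ω : List B) : cs.signRep (π ω) = (ω.map cs.signPerm).prod := by
  induction ω with
  | nil => simp
  | cons i ω ih => rw [wordProd_cons, map_mul, signRep_simple, ih, List.map_cons, List.prod_cons]

theorem signRep_apply (v w : W) (ε : ℤˣ) :
    cs.signRep v (w, ε) = (v * w * v⁻¹, ε * (cs.signRep v (w, 1)).2) := by
  obtain ⟨ω, rfl⟩ := cs.wordProd_surjective v
  simp only [signRep_wordProd, prod_map_signPerm_apply, one_mul]

theorem signRep_wordProd_apply_of_not_mem {ω : List B} {t : W} (ht : t ∉ ris ω) (ε : ℤˣ) :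
    cs.signRep (π ω) (t, ε) = (π ω * t * (π ω)⁻¹, ε) := by
  rw [signRep_wordProd, prod_map_signPerm_apply, List.count_eq_zero_of_not_mem ht, pow_zero,
    mul_one]

/-- For `t = u s_i u⁻¹` the signs picked up by `u⁻¹` and by `u` cancel, and `s_i` flips it. -/
theorem signRep_apply_self {t : W} (ht : cs.IsReflection t) (ε : ℤˣ) :
    cs.signRep t (t, ε) = (t, -ε) := by
  obtain ⟨u, i, rfl⟩ := ht
  have hconj : u⁻¹ * (u * s i * u⁻¹) * u⁻¹⁻¹ = s i := by group
  have hcancel : (cs.signRep u⁻¹ (u * s i * u⁻¹, 1)).2 * (cs.signRep u (s i, 1)).2 = 1 := by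
    have h : cs.signRep u (cs.signRep u⁻¹ (u * s i * u⁻¹, 1)) = (u * s i * u⁻¹, 1) := by
      rw [← Equiv.Perm.mul_apply, ← map_mul, mul_inv_cancel, map_one, Equiv.Perm.one_apply]
    rw [signRep_apply cs u⁻¹, hconj, signRep_apply, one_mul] at h
    exact congrArg Prod.snd h
  rw [map_mul, map_mul, Equiv.Perm.mul_apply, Equiv.Perm.mul_apply, signRep_apply cs u⁻¹, hconj,
    signRep_simple, signPerm_apply, if_pos rfl, signRep_apply, simple_mul_simple_self, one_mul,
    neg_mul, mul_assoc ε, hcancel, mul_one]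

/-- The strong exchange condition. If `t ∉ ris ω`, then `π ω` keeps the sign at `t`, so
`π ω * t` flips it and `t` would also be a right inversion of `π ω * t`. -/
theorem mem_rightInvSeq_of_isRightInversion {ω : List B} {t : W}
    (ht : cs.IsRightInversion (π ω) t) : t ∈ ris ω := by
  by_contra hnot
  obtain ⟨ω', hω', hω't⟩ := cs.exists_isReduced (π ω * t)
  have hmem : t ∈ ris ω' := by
    by_contra hnot'
    have h := congrArg (fun p => (cs.signRep (π ω) p).2) (cs.signRep_apply_self ht.1 1)
    simp only [← Equiv.Perm.mul_apply, ← map_mul] at h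
    rw [hω't, signRep_wordProd_apply_of_not_mem cs hnot',
      signRep_wordProd_apply_of_not_mem cs hnot] at h
    simp only at h
    exact absurd h (by decide)
  have hlt := (cs.isRightInversion_of_mem_rightInvSeq hω' hmem).2
  rw [← hω't, mul_assoc, ht.1.mul_self, mul_one] at hlt
  exact lt_asymm ht.2 hlt

theorem mem_leftInvSeq_of_isLeftInversion {ω : List B} {t : W}
    (ht : cs.IsLeftInversion (π ω) t) : t ∈ lis ω := by
  have h := cs.mem_rightInvSeq_of_isRightInversion (ω := ω.reverse)
    (by rwa [wordProd_reverse, isRightInversion_inv_iff])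
  rwa [rightInvSeq_reverse, List.mem_reverse] at h

theorem exists_sublist_mul_eq_of_isRightInversion {ω : List B} {t : W}
    (ht : cs.IsRightInversion (π ω) t) :
    ∃ ω', ω' <+ ω ∧ ω'.length + 1 = ω.length ∧ π ω * t = π ω' := by
  obtain ⟨j, hj, rfl⟩ := List.mem_iff_getElem.mp (cs.mem_rightInvSeq_of_isRightInversion ht)
  have hj' : j < ω.length := by simpa using hj
  refine ⟨ω.eraseIdx j, List.eraseIdx_sublist _ _, List.length_eraseIdx_add_one hj', ?_⟩
  rw [← List.getD_eq_getElem _ 1, wordProd_mul_getD_rightInvSeq]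

theorem exists_sublist_mul_eq_of_isLeftInversion {ω : List B} {t : W}
    (ht : cs.IsLeftInversion (π ω) t) :
    ∃ ω', ω' <+ ω ∧ ω'.length + 1 = ω.length ∧ t * π ω = π ω' := by
  obtain ⟨j, hj, rfl⟩ := List.mem_iff_getElem.mp (cs.mem_leftInvSeq_of_isLeftInversion ht)
  have hj' : j < ω.length := by simpa using hj
  refine ⟨ω.eraseIdx j, List.eraseIdx_sublist _ _, List.length_eraseIdx_add_one hj', ?_⟩
  rw [← List.getD_eq_getElem _ 1, getD_leftInvSeq_mul_wordProd]

/-- The deletion condition. -/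
theorem exists_sublist_wordProd_eq_of_not_isReduced {ω : List B} (hω : ¬cs.IsReduced ω) :
    ∃ ω', ω' <+ ω ∧ ω'.length < ω.length ∧ π ω' = π ω := by
  induction ω using List.reverseRecOn with
  | nil => exact absurd (by simp [IsReduced]) hω
  | append_singleton ω i ih =>
    by_cases hred : cs.IsReduced ω
    · have hlt : ℓ (π ω * s i) < ℓ (π ω) := by
        rcases cs.length_mul_simple (π ω) i with h | h
        · refine absurd ?_ hω
          rw [IsReduced, wordProd_append, wordProd_singleton, h, hred, List.length_append,
            List.length_singleton]
        · omega
      obtain ⟨ω', hsub, hlen, heq⟩ :=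
        cs.exists_sublist_mul_eq_of_isRightInversion ⟨cs.isReflection_simple i, hlt⟩
      refine ⟨ω', hsub.trans (List.sublist_append_left _ _), by simp; omega, ?_⟩
      rw [wordProd_append, wordProd_singleton, heq]
    · obtain ⟨ω', hsub, hlen, heq⟩ := ih hred
      exact ⟨ω' ++ [i], hsub.append_right _, by simpa using hlen,
        by rw [wordProd_append, wordProd_append, heq]⟩

end StrongExchange

section Parabolic

open scoped List

variable {B W : Type*} [Group W] {M : CoxeterMatrix B} (cs : CoxeterSystem M W) {K L : Finset B}

local prefix:100 "s" => cs.simple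
local prefix:100 "π" => cs.wordProd
local prefix:100 "ℓ" => cs.length

theorem parabolic_mono (h : K ⊆ L) : parabolic cs K ≤ parabolic cs L :=
  Subgroup.closure_mono (Set.image_mono (Finset.coe_subset.mpr h))

theorem simple_mem_parabolic {i : B} (hi : i ∈ K) : s i ∈ parabolic cs K :=
  Subgroup.subset_closure ⟨i, hi, rfl⟩

theorem wordProd_mem_parabolic {ω : List B} (hω : ∀ b ∈ ω, b ∈ K) : π ω ∈ parabolic cs K := by
  induction ω with
  | nil => exact one_mem _
  | cons i ω ih =>
    rw [wordProd_cons]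
    exact mul_mem (cs.simple_mem_parabolic (hω i List.mem_cons_self))
      (ih fun b hb => hω b (List.mem_cons_of_mem i hb))

theorem exists_wordProd_eq_of_mem_parabolic {u : W} (hu : u ∈ parabolic cs K) :
    ∃ ω : List B, (∀ b ∈ ω, b ∈ K) ∧ π ω = u := by
  induction hu using Subgroup.closure_induction with
  | mem x hx =>
    obtain ⟨i, hi, rfl⟩ := hx
    exact ⟨[i], by simpa using hi, wordProd_singleton cs i⟩
  | one => exact ⟨[], by simp, wordProd_nil cs⟩
  | mul x y _ _ hx hy =>
    obtain ⟨ω₁, h₁, rfl⟩ := hx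
    obtain ⟨ω₂, h₂, rfl⟩ := hy
    exact ⟨ω₁ ++ ω₂, fun b hb => (List.mem_append.mp hb).elim (h₁ b) (h₂ b),
      wordProd_append cs ω₁ ω₂⟩
  | inv x _ hx =>
    obtain ⟨ω, h, rfl⟩ := hx
    exact ⟨ω.reverse, fun b hb => h b (List.mem_reverse.mp hb), wordProd_reverse cs ω⟩

/-- Deleting a letter of `ωx` would give a shorter element of `x W_K`, deleting one of `ωu` a
shorter `K`-word. -/
theorem isReduced_append_of_forall_length_le {x : W}
    (hx : ∀ u ∈ parabolic cs K, ℓ x ≤ ℓ (x * u)) {ωx ωu : List B} (hωx : cs.IsReduced ωx)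
    (hπx : π ωx = x) (hωu : ∀ b ∈ ωu, b ∈ K)
    (hmin : ∀ ω : List B, (∀ b ∈ ω, b ∈ K) → π ω = π ωu → ωu.length ≤ ω.length) :
    cs.IsReduced (ωx ++ ωu) := by
  by_contra hred
  obtain ⟨ω', hsub, hlen, heq⟩ := cs.exists_sublist_wordProd_eq_of_not_isReduced hred
  obtain ⟨r₁, r₂, rfl, h₁, h₂⟩ := List.sublist_append_iff.mp hsub
  have hr₂ : ∀ b ∈ r₂, b ∈ K := fun b hb => hωu b (h₂.subset hb)
  rw [wordProd_append, wordProd_append] at heq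
  simp only [List.length_append] at hlen
  rcases h₁.length_le.lt_or_eq with hlt | hEq
  · have hcoset : x * (π ωu * (π r₂)⁻¹) = π r₁ := by
      rw [← hπx, ← mul_assoc, ← heq, mul_inv_cancel_right]
    have hle := hx _ (mul_mem (cs.wordProd_mem_parabolic hωu)
      (inv_mem (cs.wordProd_mem_parabolic hr₂)))
    have := cs.length_wordProd_le r₁
    rw [hcoset, ← hπx, hωx] at hle
    omega
  · rw [h₁.eq_of_length hEq] at heq hlen
    have := hmin r₂ hr₂ (mul_left_cancel heq)
    omega

theorem exists_isReduced_of_mem_parabolic {u : W} (hu : u ∈ parabolic cs K) :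
    ∃ ω : List B, (∀ b ∈ ω, b ∈ K) ∧ cs.IsReduced ω ∧ π ω = u := by
  classical
  have hex : ∃ n, ∃ ω : List B, (∀ b ∈ ω, b ∈ K) ∧ π ω = u ∧ ω.length = n := by
    obtain ⟨ω, hωK, hωu⟩ := cs.exists_wordProd_eq_of_mem_parabolic hu
    exact ⟨_, ω, hωK, hωu, rfl⟩
  obtain ⟨ω, hωK, hωu, hlen⟩ := Nat.find_spec hex
  have hred := cs.isReduced_append_of_forall_length_le (x := 1) (by simp) (ωx := [])
    (by simp [IsReduced]) rfl hωK
    (fun ω' h₁ h₂ => hlen ▸ Nat.find_min' hex ⟨ω', h₁, h₂.trans hωu, rfl⟩)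
  exact ⟨ω, hωK, by simpa using hred, hωu⟩

theorem exists_forall_length_le_mul (K : Finset B) (v : W) :
    ∃ x, x⁻¹ * v ∈ parabolic cs K ∧ ∀ u ∈ parabolic cs K, ℓ x ≤ ℓ (x * u) := by
  classical
  have hex : ∃ n, ∃ u ∈ parabolic cs K, ℓ (v * u) = n := ⟨_, 1, one_mem _, rfl⟩
  obtain ⟨u₀, hu₀, hlen⟩ := Nat.find_spec hex
  refine ⟨v * u₀, by simpa using inv_mem hu₀, fun u hu => ?_⟩
  rw [hlen, mul_assoc]
  exact Nat.find_min' hex ⟨u₀ * u, mul_mem hu₀ hu, rfl⟩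

theorem length_mul_of_forall_length_le {x u : W} (hx : ∀ u ∈ parabolic cs K, ℓ x ≤ ℓ (x * u))
    (hu : u ∈ parabolic cs K) : ℓ (x * u) = ℓ x + ℓ u := by
  obtain ⟨ωx, hωx, rfl⟩ := cs.exists_isReduced x
  obtain ⟨ωu, hωuK, hωu, rfl⟩ := cs.exists_isReduced_of_mem_parabolic hu
  have hred := cs.isReduced_append_of_forall_length_le hx hωx rfl hωuK
    (fun ω _ h => by rw [← hωu.eq, ← h]; exact cs.length_wordProd_le ω)
  rw [← wordProd_append, hred.eq, hωx.eq, hωu.eq, List.length_append]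

theorem exists_mem_isLeftDescent_of_mem_parabolic {u : W} (hu : u ∈ parabolic cs K)
    (hne : u ≠ 1) : ∃ a ∈ K, cs.IsLeftDescent u a := by
  obtain ⟨_ | ⟨a, ω⟩, hωK, hω, rfl⟩ := cs.exists_isReduced_of_mem_parabolic hu
  · exact absurd (wordProd_nil cs) hne
  · refine ⟨a, hωK a List.mem_cons_self, ?_⟩
    rw [IsLeftDescent, hω.eq, wordProd_cons, simple_mul_simple_cancel_left, List.length_cons]
    exact Nat.lt_succ_of_le (cs.length_wordProd_le ω)

theorem exists_mem_isRightDescent_of_mem_parabolic {u : W} (hu : u ∈ parabolic cs K)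
    (hne : u ≠ 1) : ∃ a ∈ K, cs.IsRightDescent u a := by
  obtain ⟨a, ha, h⟩ :=
    cs.exists_mem_isLeftDescent_of_mem_parabolic (inv_mem hu) (inv_ne_one.mpr hne)
  exact ⟨a, ha, cs.isLeftDescent_inv_iff.mp h⟩

end Parabolic

end CoxeterSystem

section MinimalRepresentatives

variable {B W : Type*} [Group W] {M : CoxeterMatrix B} {cs : CoxeterSystem M W} {K L : Finset B}
  {x u : W}

local prefix:100 "s" => cs.simple
local prefix:100 "π" => cs.wordProd
local prefix:100 "ℓ" => cs.length

/-- `x ∈ Wᴷ`: `x` is the minimal length representative of its coset `x W_K`. -/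
def IsMinRight (cs : CoxeterSystem M W) (K : Finset B) (x : W) : Prop :=
  ∀ j ∈ K, cs.length x < cs.length (x * cs.simple j)

theorem exists_isMinRight_inv_mul_mem (cs : CoxeterSystem M W) (K : Finset B) (v : W) :
    ∃ x, IsMinRight cs K x ∧ x⁻¹ * v ∈ parabolic cs K := by
  obtain ⟨x, hxv, hx⟩ := cs.exists_forall_length_le_mul K v
  exact ⟨x, fun j hj => lt_of_le_of_ne (hx _ (cs.simple_mem_parabolic hj))
    (cs.length_mul_simple_ne x j).symm, hxv⟩

/-- Pigeonhole: an injective self-map of the finite set `{s_a : a ∈ K}` is onto. -/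
theorem exists_apply_simple_eq_conj (δW : W ≃* W) {x : W}
    (hK : ∀ i ∈ K, ∃ j ∈ K, δW (s i) = x * s j * x⁻¹) :
    ∀ a ∈ K, ∃ i ∈ K, δW (s i) = x * s a * x⁻¹ := by
  classical
  let f : W → W := fun t => x⁻¹ * δW t * x
  have hf : Function.Injective f := fun t t' htt' => δW.injective (by simpa [f] using htt')
  have hsub : (K.image cs.simple).image f ⊆ K.image cs.simple := by
    simp only [Finset.image_subset_iff, Finset.mem_image]
    intro t ⟨i, hi, hit⟩
    obtain ⟨j, hj, hij⟩ := hK i hi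
    refine ⟨j, hj, ?_⟩
    rw [← hit]
    simp only [f, hij]
    group
  have himage := Finset.eq_of_subset_of_card_le hsub (Finset.card_image_of_injective _ hf).ge
  intro a ha
  have hmem : s a ∈ (K.image cs.simple).image f := by
    rw [himage]
    exact Finset.mem_image_of_mem _ ha
  simp only [Finset.mem_image, exists_exists_and_eq_and] at hmem
  obtain ⟨i, hi, hia⟩ := hmem
  refine ⟨i, hi, ?_⟩
  rw [← hia]
  simp only [f]
  group

theorem IsMinLeft.mono (h : IsMinLeft cs L x) (hKL : K ⊆ L) : IsMinLeft cs K x :=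
  fun i hi => h i (hKL hi)

namespace IsMinRight

/-- If `m` is shortest in `x W_K` and `m ≠ x`, a right descent `j ∈ K` of `m⁻¹ x` is one of
`x = m (m⁻¹ x)`. -/
theorem forall_length_le_mul (hx : IsMinRight cs K x) :
    ∀ u ∈ parabolic cs K, ℓ x ≤ ℓ (x * u) := by
  obtain ⟨m, hm, hmin⟩ := cs.exists_forall_length_le_mul K x
  obtain rfl : m = x := by
    by_contra hne
    obtain ⟨j, hj, hdesc⟩ :=
      cs.exists_mem_isRightDescent_of_mem_parabolic hm (by rwa [ne_eq, inv_mul_eq_one])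
    have hadd := cs.length_mul_of_forall_length_le hmin hm
    have hle := cs.length_mul_le m (m⁻¹ * x * s j)
    rw [mul_inv_cancel_left] at hadd
    rw [← mul_assoc, mul_inv_cancel_left] at hle
    have := hx j hj
    rw [IsRightDescent] at hdesc
    omega
  exact hmin

theorem length_mul (hx : IsMinRight cs K x) (hu : u ∈ parabolic cs K) :
    ℓ (x * u) = ℓ x + ℓ u :=
  cs.length_mul_of_forall_length_le hx.forall_length_le_mul hu

theorem eq_of_inv_mul_mem {y : W} (hx : IsMinRight cs K x) (hy : IsMinRight cs K y)
    (hxy : x⁻¹ * y ∈ parabolic cs K) : x = y := by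
  have h₁ := hx.length_mul hxy
  have h₂ := hy.length_mul (by simpa using inv_mem hxy)
  rw [mul_inv_cancel_left] at h₁ h₂
  have hinv : ℓ (y⁻¹ * x) = ℓ (x⁻¹ * y) := by rw [← length_inv, mul_inv_rev, inv_inv]
  have h₀ : ℓ (x⁻¹ * y) = 0 := by omega
  rwa [length_eq_zero_iff, inv_mul_eq_one] at h₀

theorem exists_conj_eq_simple (hx : IsMinRight cs K x) {i : B}
    (hi : x⁻¹ * s i * x ∈ parabolic cs K) : ∃ j ∈ K, x⁻¹ * s i * x = s j := by
  have hadd := hx.length_mul hi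
  rw [show x * (x⁻¹ * s i * x) = s i * x by group] at hadd
  have hle := cs.length_mul_le (s i) x
  rw [length_simple] at hle
  have hne : x⁻¹ * s i * x ≠ 1 := by
    rw [ne_eq, mul_assoc, inv_mul_eq_one, eq_comm, mul_eq_right]
    exact fun h => by simpa [h] using cs.length_simple i
  obtain ⟨a, ha, hdesc⟩ := cs.exists_mem_isLeftDescent_of_mem_parabolic hi hne
  rw [IsLeftDescent] at hdesc
  have h₀ : ℓ (s a * (x⁻¹ * s i * x)) = 0 := by omega
  rw [length_eq_zero_iff, mul_eq_one_iff_eq_inv', inv_simple] at h₀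
  exact ⟨a, ha, h₀⟩

/-- Exchange `s_i` against a letter of the reduced word `ωx ++ ωu` of `x u`: the letter cannot
lie in `ωx` since `s_i` is not a left descent of `x`, so `s_i x u = x u'` with `u' ∈ W_K`. -/
theorem conj_mem_parabolic_of_length_lt (hx : IsMinRight cs K x) (hu : u ∈ parabolic cs K)
    {i : B} (hi : ℓ x < ℓ (s i * x)) (hlt : ℓ (s i * (x * u)) < ℓ (x * u)) :
    x⁻¹ * s i * x ∈ parabolic cs K := by
  obtain ⟨ωx, hωx, rfl⟩ := cs.exists_isReduced x
  obtain ⟨ωu, hωuK, -, rfl⟩ := cs.exists_isReduced_of_mem_parabolic hu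
  rw [← wordProd_append] at hlt
  obtain ⟨ω', hsub, hlen, heq⟩ :=
    cs.exists_sublist_mul_eq_of_isLeftInversion ⟨cs.isReflection_simple i, hlt⟩
  obtain ⟨r₁, r₂, rfl, h₁, h₂⟩ := List.sublist_append_iff.mp hsub
  rw [wordProd_append, wordProd_append] at heq
  simp only [List.length_append] at hlen
  rcases h₁.length_le.lt_or_eq with hlt₁ | heq₁
  · exfalso
    rw [h₂.eq_of_length (by have := h₂.length_le; omega), ← mul_assoc] at heq
    have := cs.length_wordProd_le r₁
    rw [← mul_right_cancel heq] at this
    rw [hωx.eq] at hi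
    omega
  · rw [h₁.eq_of_length heq₁] at heq
    have hconj : (π ωx)⁻¹ * s i * π ωx = π r₂ * (π ωu)⁻¹ :=
      calc _ = (π ωx)⁻¹ * (s i * (π ωx * π ωu)) * (π ωu)⁻¹ := by group
        _ = _ := by rw [heq]; group
    rw [hconj]
    exact mul_mem (cs.wordProd_mem_parabolic fun b hb => hωuK b (h₂.subset hb))
      (inv_mem (cs.wordProd_mem_parabolic hωuK))

end IsMinRight

theorem IsMinLeft.of_mul (h : IsMinLeft cs L (x * u)) (hx : IsMinRight cs K x)
    (hu : u ∈ parabolic cs K) : IsMinLeft cs L x := by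
  intro i hi
  by_contra hge
  have hlt : ℓ (s i * x) < ℓ x := lt_of_le_of_ne (not_lt.mp hge) (cs.length_simple_mul_ne x i)
  have := h i hi
  have := hx.length_mul hu
  have := cs.length_mul_le (s i * x) u
  rw [mul_assoc] at this
  omega

end MinimalRepresentatives

section Bedard

variable {B W : Type*} [DecidableEq B] [Group W] {M : CoxeterMatrix B} {cs : CoxeterSystem M W}
  {δW : W ≃* W} {δb : B ≃ B} {J : Finset B}

local prefix:100 "s" => cs.simple
local prefix:100 "ℓ" => cs.length

/-- A nontrivial `x⁻¹ v` would have a left descent `s_a` with `a ∈ K`, and then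
`x s_a x⁻¹ = s_{δ i}` would be a left descent of `v`. -/
theorem IsMinRight.eq_of_forall_exists_conj {K : Finset B} {x v : W} (hx : IsMinRight cs K x)
    (hxv : x⁻¹ * v ∈ parabolic cs K) (hv : IsMinLeft cs (K.image δb) v)
    (hδ : ∀ i : B, δW (cs.simple i) = cs.simple (δb i))
    (hK : ∀ i ∈ K, ∃ j ∈ K, δW (s i) = x * s j * x⁻¹) : x = v := by
  by_contra hne
  obtain ⟨a, ha, hdesc⟩ :=
    cs.exists_mem_isLeftDescent_of_mem_parabolic hxv (by rwa [ne_eq, inv_mul_eq_one])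
  obtain ⟨i, hi, hia⟩ := exists_apply_simple_eq_conj δW hK a ha
  have hadd := hx.length_mul hxv
  rw [mul_inv_cancel_left] at hadd
  have hle := cs.length_mul_le x (s a * (x⁻¹ * v))
  rw [show x * (s a * (x⁻¹ * v)) = s (δb i) * v by rw [← hδ, hia]; group] at hle
  have := hv (δb i) (Finset.mem_image_of_mem _ hi)
  rw [IsLeftDescent] at hdesc
  omega

namespace InT

variable {Js : ℕ → Finset B} {ws : ℕ → W}

theorem Js_zero (h : InT cs δW δb J Js ws) : Js 0 = J := h.1

theorem isMinLeft (h : InT cs δW δb J Js ws) (n : ℕ) :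
    IsMinLeft cs ((Js n).image δb) (ws n) :=
  (h.2.1 n).1

theorem isMinRight (h : InT cs δW δb J Js ws) (n : ℕ) : IsMinRight cs (Js n) (ws n) :=
  (h.2.1 n).2

theorem mem_succ_iff (h : InT cs δW δb J Js ws) (n : ℕ) (i : B) :
    i ∈ Js (n + 1) ↔ i ∈ Js n ∧ ∃ j ∈ Js n, δW (s i) = ws n * s j * (ws n)⁻¹ :=
  h.2.2.1 n i

theorem inv_mul_succ_mem (h : InT cs δW δb J Js ws) (n : ℕ) :
    (ws n)⁻¹ * ws (n + 1) ∈ parabolic cs (Js n) :=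
  h.2.2.2 n

theorem antitone (h : InT cs δW δb J Js ws) : Antitone Js :=
  antitone_nat_of_succ_le fun n _ hi => ((h.mem_succ_iff n _).mp hi).1

theorem subset_J (h : InT cs δW δb J Js ws) (n : ℕ) : Js n ⊆ J :=
  h.Js_zero ▸ h.antitone n.zero_le

theorem inv_mul_mem (h : InT cs δW δb J Js ws) {n m : ℕ} (hnm : n ≤ m) :
    (ws n)⁻¹ * ws m ∈ parabolic cs (Js n) := by
  induction m, hnm using Nat.le_induction with
  | base => simp [one_mem]
  | succ m hnm ih =>
    rw [← mul_inv_cancel_left (ws m) (ws (m + 1)), ← mul_assoc]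
    exact mul_mem ih (parabolic_mono cs (h.antitone hnm) (h.inv_mul_succ_mem m))

theorem length_succ (h : InT cs δW δb J Js ws) (n : ℕ) :
    ℓ (ws (n + 1)) = ℓ (ws n) + ℓ ((ws n)⁻¹ * ws (n + 1)) := by
  simpa using (h.isMinRight n).length_mul (h.inv_mul_succ_mem n)

/-- The lengths `ℓ (w_n)` increase, and are bounded because all `w_n` lie in `w_0 W_J`. -/
theorem exists_forall_ge_eq (h : InT cs δW δb J Js ws) (hJ : Finite (parabolic cs J)) :
    ∃ N, ∀ n, N ≤ n → ws n = ws N := by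
  obtain ⟨C, hC⟩ := ((Set.finite_coe_iff.mp hJ).image cs.length).bddAbove
  have hbound (n : ℕ) : ℓ (ws n) ≤ ℓ (ws 0) + C := by
    have hmem : (ws 0)⁻¹ * ws n ∈ parabolic cs J := h.Js_zero ▸ h.inv_mul_mem n.zero_le
    calc ℓ (ws n) = ℓ (ws 0 * ((ws 0)⁻¹ * ws n)) := by rw [mul_inv_cancel_left]
      _ ≤ ℓ (ws 0) + ℓ ((ws 0)⁻¹ * ws n) := cs.length_mul_le _ _
      _ ≤ ℓ (ws 0) + C := Nat.add_le_add_left (hC ⟨_, hmem, rfl⟩) _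
  have hanti : Antitone fun n => ℓ (ws 0) + C - ℓ (ws n) :=
    antitone_nat_of_succ_le fun n => by have := h.length_succ n; omega
  obtain ⟨N, hN⟩ := WellFoundedLT.antitone_chain_condition hanti
  refine ⟨N, fun n hn => ?_⟩
  induction n, hn using Nat.le_induction with
  | base => rfl
  | succ n hn ih =>
    have h₀ : ℓ ((ws n)⁻¹ * ws (n + 1)) = 0 := by
      have := hN n hn
      have := hN (n + 1) (by omega)
      have := h.length_succ n
      have := hbound n
      have := hbound (n + 1)
      omega
    rw [length_eq_zero_iff, inv_mul_eq_one] at h₀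
    rw [← h₀, ih]

theorem mem_succ_of_conj_mem (h : InT cs δW δb J Js ws)
    (hδ : ∀ i : B, δW (cs.simple i) = cs.simple (δb i)) {n : ℕ} {i : B} (hi : i ∈ Js n)
    (hconj : (ws n)⁻¹ * s (δb i) * ws n ∈ parabolic cs (Js n)) : i ∈ Js (n + 1) := by
  obtain ⟨j, hj, hij⟩ := (h.isMinRight n).exists_conj_eq_simple hconj
  refine (h.mem_succ_iff n i).mpr ⟨hi, j, hj, ?_⟩
  rw [hδ, ← hij]
  group

/-- The invariant of Bédard's argument: `w_n ∈ ^{δ(J)}W` for the whole of `J`, not only for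
`J_n`; the second conjunct is what carries it from `n` to `n + 1`. -/
theorem lt_length_simple_mul_and_mem_of_conj_mem (h : InT cs δW δb J Js ws)
    (hδ : ∀ i : B, δW (cs.simple i) = cs.simple (δb i)) (n : ℕ) {i : B} (hi : i ∈ J) :
    ℓ (ws n) < ℓ (s (δb i) * ws n) ∧
      ((ws n)⁻¹ * s (δb i) * ws n ∈ parabolic cs (Js n) → i ∈ Js n) := by
  induction n with
  | zero =>
    rw [h.Js_zero]
    exact ⟨h.isMinLeft 0 _ (Finset.mem_image_of_mem _ (h.Js_zero ▸ hi)), fun _ => hi⟩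
  | succ n ih =>
    obtain ⟨hlt, hmem⟩ := ih
    have hu := h.inv_mul_succ_mem n
    have hstep := fun hc => h.mem_succ_of_conj_mem hδ (hmem hc) hc
    have hws : ws n * ((ws n)⁻¹ * ws (n + 1)) = ws (n + 1) := mul_inv_cancel_left _ _
    constructor
    · by_contra hge
      have hdesc : ℓ (s (δb i) * ws (n + 1)) < ℓ (ws (n + 1)) :=
        lt_of_le_of_ne (not_lt.mp hge) (cs.length_simple_mul_ne _ _)
      have hconj := (h.isMinRight n).conj_mem_parabolic_of_length_lt hu hlt (by rwa [hws])
      exact hge (h.isMinLeft (n + 1) _ (Finset.mem_image_of_mem _ (hstep hconj)))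
    · intro hc
      apply hstep
      have hconj : (ws n)⁻¹ * s (δb i) * ws n = ((ws n)⁻¹ * ws (n + 1)) *
          ((ws (n + 1))⁻¹ * s (δb i) * ws (n + 1)) * ((ws n)⁻¹ * ws (n + 1))⁻¹ := by group
      rw [hconj]
      exact mul_mem (mul_mem hu (parabolic_mono cs (h.antitone n.le_succ) hc)) (inv_mem hu)

theorem exists_evVal_isMinLeft (h : InT cs δW δb J Js ws)
    (hδ : ∀ i : B, δW (cs.simple i) = cs.simple (δb i)) (hJ : Finite (parabolic cs J)) :
    ∃ v : W, EvVal ws v ∧ IsMinLeft cs (J.image δb) v := by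
  obtain ⟨N, hN⟩ := h.exists_forall_ge_eq hJ
  refine ⟨ws N, ⟨N, hN⟩, ?_⟩
  rw [IsMinLeft, Finset.forall_mem_image]
  exact fun i hi => (h.lt_length_simple_mul_and_mem_of_conj_mem hδ N hi).1

theorem inv_mul_mem_of_evVal (h : InT cs δW δb J Js ws) {v : W} (hv : EvVal ws v) (n : ℕ) :
    (ws n)⁻¹ * v ∈ parabolic cs (Js n) := by
  obtain ⟨N, hN⟩ := hv
  simpa [hN (max n N) (le_max_right n N)] using h.inv_mul_mem (le_max_left n N)

/-- Both sequences consist of the minimal representatives of the cosets `v W_{J_n}`. -/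
theorem eq_of_evVal {Js' : ℕ → Finset B} {ws' : ℕ → W} {v : W} (h : InT cs δW δb J Js ws)
    (h' : InT cs δW δb J Js' ws') (hv : EvVal ws v) (hv' : EvVal ws' v) :
    Js = Js' ∧ ws = ws' := by
  have hws (n : ℕ) (hn : Js n = Js' n) : ws n = ws' n := by
    have hmem := mul_mem (h.inv_mul_mem_of_evVal hv n)
      (inv_mem (hn ▸ h'.inv_mul_mem_of_evVal hv' n))
    refine (h.isMinRight n).eq_of_inv_mul_mem (hn ▸ h'.isMinRight n) ?_
    simpa [mul_assoc] using hmem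
  have hJs (n : ℕ) : Js n = Js' n := by
    induction n with
    | zero => rw [h.Js_zero, h'.Js_zero]
    | succ n ih =>
      ext i
      rw [h.mem_succ_iff, h'.mem_succ_iff, ih, hws n ih]
  exact ⟨funext hJs, funext fun n => hws n (hJs n)⟩

theorem evVal_of_forall_inv_mul_mem (h : InT cs δW δb J Js ws)
    (hδ : ∀ i : B, δW (cs.simple i) = cs.simple (δb i)) {v : W}
    (hv : IsMinLeft cs (J.image δb) v) (hws : ∀ n, (ws n)⁻¹ * v ∈ parabolic cs (Js n)) :
    EvVal ws v := by
  obtain ⟨N, hN⟩ := WellFoundedLT.antitone_chain_condition h.antitone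
  refine ⟨N, fun n hn => (h.isMinRight n).eq_of_forall_exists_conj (hws n)
    (hv.mono (Finset.image_subset_image (h.subset_J n))) hδ fun i hi => ?_⟩
  have hi' : i ∈ Js (n + 1) := by rwa [← hN (n + 1) (by omega), hN n hn]
  exact ((h.mem_succ_iff n i).mp hi').2

end InT

open scoped Classical in
/-- The sequence `J_n` of `T(J,δ)` when `w_n` is taken to be `R J_n`. -/
noncomputable def bedardSeq (cs : CoxeterSystem M W) (δW : W ≃* W) (J : Finset B)
    (R : Finset B → W) : ℕ → Finset B
  | 0 => J
  | n + 1 =>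
    let K := bedardSeq cs δW J R n
    K.filter fun i => ∃ j ∈ K, δW (cs.simple i) = R K * cs.simple j * (R K)⁻¹

theorem inT_bedardSeq {R : Finset B → W} {v : W}
    (hR : ∀ K, IsMinRight cs K (R K) ∧ (R K)⁻¹ * v ∈ parabolic cs K)
    (hv : IsMinLeft cs (J.image δb) v) :
    InT cs δW δb J (bedardSeq cs δW J R) fun n => R (bedardSeq cs δW J R n) := by
  classical
  have hanti : Antitone (bedardSeq cs δW J R) :=
    antitone_nat_of_succ_le fun n => Finset.filter_subset _ _
  refine ⟨rfl, fun n => ⟨?_, (hR _).1⟩, fun n i => Finset.mem_filter, fun n => ?_⟩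
  · refine (IsMinLeft.of_mul ?_ (hR _).1 (hR _).2).mono
      (Finset.image_subset_image (hanti n.zero_le))
    rwa [mul_inv_cancel_left]
  · set K := bedardSeq cs δW J R n
    set K' := bedardSeq cs δW J R (n + 1)
    rw [show (R K)⁻¹ * R K' = ((R K)⁻¹ * v) * ((R K')⁻¹ * v)⁻¹ by group]
    exact mul_mem (hR K).2 (inv_mem (parabolic_mono cs (hanti n.le_succ) (hR K').2))

theorem exists_inT_evVal (hδ : ∀ i : B, δW (cs.simple i) = cs.simple (δb i)) {v : W}
    (hv : IsMinLeft cs (J.image δb) v) : ∃ Js ws, InT cs δW δb J Js ws ∧ EvVal ws v := by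
  choose R hR using (exists_isMinRight_inv_mul_mem cs · v)
  have h := inT_bedardSeq (δW := δW) hR hv
  exact ⟨_, _, h, h.evVal_of_forall_inv_mul_mem hδ hv fun n => (hR _).2⟩

end Bedard

/-- Bédard: Let `(W,S)` be a Coxeter system, `δ` a length-preserving
automorphism of `W` permuting the simple reflections, and `J ⊆ S` with `W_J` finite.
Then every sequence in `T(J,δ)` has an eventually constant `w`-component, and the map
`(J_n,w_n)_{n≥0} ↦ w_∞` is a bijection from `T(J,δ)` onto `^{δ(J)}W`, the set of
minimal length representatives of the cosets `W_{δ(J)}\W`. -/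
theorem bedard_bijection (cs : CoxeterSystem M W)
    (δW : W ≃* W) (δb : B ≃ B)
    (hδ : ∀ i : B, δW (cs.simple i) = cs.simple (δb i))
    (J : Finset B) (hJfin : Finite (parabolic cs J)) :
    (∀ Js ws, InT cs δW δb J Js ws →
        ∃ v : W, EvVal ws v ∧ IsMinLeft cs (J.image δb) v) ∧
    (∀ Js ws Js' ws' (v : W), InT cs δW δb J Js ws → InT cs δW δb J Js' ws' →
        EvVal ws v → EvVal ws' v → Js = Js' ∧ ws = ws') ∧
    (∀ v : W, IsMinLeft cs (J.image δb) v →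
        ∃ Js ws, InT cs δW δb J Js ws ∧ EvVal ws v) :=
  ⟨fun _ _ h => h.exists_evVal_isMinLeft hδ hJfin,
    fun _ _ _ _ _ h h' hv hv' => h.eq_of_evVal h' hv hv',
    fun _ hv => exists_inT_evVal hδ hv⟩
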